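/- Let Y ∈ ℝ^{n×q}, X = [X₁, …, X_K] with X_k ∈ ℝ^{n×p_k}, λ > 0 and w_k > 0. The function (B, σ) ↦ (1/(2nqσ))‖Y − XB‖_F² + σ/2 + λ Σ_{k=1}^K w_k ‖B_k‖_* is jointly convex on the convex set ℝ^{p×q} × (0, ∞). -/

import Mathlib

open Matrix

noncomputable def frobInner {m n : ℕ} (A B : Matrix (Fin m) (Fin n) ℝ) : ℝ := (Aᵀ * B).trace

noncomputable def frobNorm {m n : ℕ} (A : Matrix (Fin m) (Fin n) ℝ) : ℝ := Real.sqrt (Aᵀ * A).trace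

open scoped ComplexOrder in
noncomputable def Matrix.PosSemidef.sqrt {n : Type*} [Fintype n] [DecidableEq n] {𝕜 : Type*} [RCLike 𝕜]
    {A : Matrix n n 𝕜} (hA : A.PosSemidef) : Matrix n n 𝕜 :=
  hA.1.eigenvectorUnitary.1 * diagonal ((↑) ∘ (√·) ∘ hA.1.eigenvalues) *
  (star hA.1.eigenvectorUnitary : Matrix n n 𝕜)

noncomputable def nucNorm {m n : ℕ} (A : Matrix (Fin m) (Fin n) ℝ) : ℝ :=
  (Matrix.posSemidef_conjTranspose_mul_self A).sqrt.trace

noncomputable def opNorm {m n : ℕ} (A : Matrix (Fin m) (Fin n) ℝ) : ℝ :=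
  ‖LinearMap.toContinuousLinearMap (Matrix.toEuclideanLin A)‖

/-!
The data-fit term is the perspective `(r, σ) ↦ r² / σ` of the square, evaluated at the Frobenius
norm of the affine residual `Y - ∑ₖ Xₖ Bₖ`. It is jointly convex because
`(a r + b s)² / (a σ + b τ) ≤ a r² / σ + b s² / τ` (weighted Cauchy–Schwarz) and `r ↦ r²` is
monotone on `[0, ∞)`. The nuclear norm is convex because it is the maximum of the linear functionals
`A ↦ tr (Mᴴ A)` over the contractions `Mᴴ M ≤ 1`: with `Aᴴ A = V D Vᴴ`, Cauchy–Schwarz on the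
columns of `M V` and `A V` gives `tr (Mᴴ A) ≤ ∑ⱼ √dⱼ`, with equality at `M = A V D^{-1/2} Vᴴ`
(where `0⁻¹ = 0` on the kernel of `A`).
-/

open Set

lemma add_sq_div_add_le {a b r s σ τ : ℝ} (ha : 0 ≤ a) (hb : 0 ≤ b) (hσ : 0 < σ) (hτ : 0 < τ) :
    (a * r + b * s) ^ 2 / (a * σ + b * τ) ≤ a * (r ^ 2 / σ) + b * (s ^ 2 / τ) := by
  rcases (add_nonneg (mul_nonneg ha hσ.le) (mul_nonneg hb hτ.le)).eq_or_lt with h | h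
  · rw [← h, div_zero]
    positivity
  rw [div_le_iff₀ h, mul_div_assoc', mul_div_assoc', div_add_div _ _ hσ.ne' hτ.ne',
    div_mul_eq_mul_div, le_div_iff₀ (by positivity)]
  nlinarith [mul_nonneg (mul_nonneg ha hb) (sq_nonneg (r * τ - s * σ))]

theorem ConvexOn.sq_div {E : Type*} [AddCommGroup E] [Module ℝ E] {s : Set E} {g : E → ℝ}
    (hg : ConvexOn ℝ s g) (hg₀ : ∀ x ∈ s, 0 ≤ g x) :
    ConvexOn ℝ (s ×ˢ Ioi 0) fun x => g x.1 ^ 2 / x.2 := by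
  refine ⟨hg.1.prod (convex_Ioi 0), ?_⟩
  rintro ⟨u, σ⟩ ⟨hu, hσ : 0 < σ⟩ ⟨v, τ⟩ ⟨hv, hτ : 0 < τ⟩ a b ha hb hab
  have hden : 0 ≤ a * σ + b * τ := by positivity
  calc g (a • u + b • v) ^ 2 / (a * σ + b * τ)
      ≤ (a * g u + b * g v) ^ 2 / (a * σ + b * τ) := by
        gcongr
        · exact hg₀ _ (hg.1 hu hv ha hb hab)
        · exact hg.2 hu hv ha hb hab
    _ ≤ a * (g u ^ 2 / σ) + b * (g v ^ 2 / τ) := add_sq_div_add_le ha hb hσ hτ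

theorem ConvexOn.fun_sum {E ι : Type*} [AddCommGroup E] [Module ℝ E] {s : Set E}
    {t : Finset ι} {f : ι → E → ℝ} (hs : Convex ℝ s) (hf : ∀ i ∈ t, ConvexOn ℝ s (f i)) :
    ConvexOn ℝ s fun x => ∑ i ∈ t, f i x := by
  classical
  induction t using Finset.induction_on with
  | empty => simpa using convexOn_const 0 hs
  | insert i t hi ih =>
    simp only [Finset.sum_insert hi]
    exact (hf i (Finset.mem_insert_self i t)).add
      (ih fun j hj => hf j (Finset.mem_insert_of_mem hj))

section Frobenius

attribute [local instance] Matrix.frobeniusNormedAddCommGroup Matrix.frobeniusNormedSpace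

lemma frobNorm_eq_norm {m n : ℕ} (A : Matrix (Fin m) (Fin n) ℝ) : frobNorm A = ‖A‖ := by
  rw [frobNorm, frobenius_norm_def, Real.sqrt_eq_rpow, trace, Finset.sum_comm]
  simp [mul_apply, Real.norm_eq_abs, sq]

lemma convexOn_frobNorm {m n : ℕ} : ConvexOn ℝ univ (frobNorm : Matrix (Fin m) (Fin n) ℝ → ℝ) := by
  simpa only [← funext frobNorm_eq_norm] using
    convexOn_norm (E := Matrix (Fin m) (Fin n) ℝ) convex_univ

end Frobenius

lemma convexOn_frobNorm_sub_sum_mul {n q K : ℕ} {p : Fin K → ℕ} (Y : Matrix (Fin n) (Fin q) ℝ)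
    (X : ∀ k, Matrix (Fin n) (Fin (p k)) ℝ) :
    ConvexOn ℝ univ fun B : ∀ k, Matrix (Fin (p k)) (Fin q) ℝ => frobNorm (Y - ∑ k, X k * B k) := by
  let design : (∀ k, Matrix (Fin (p k)) (Fin q) ℝ) →ₗ[ℝ] Matrix (Fin n) (Fin q) ℝ :=
    ∑ k, (mulLeftLinearMap (Fin q) ℝ (X k)).comp (LinearMap.proj k)
  refine (convexOn_frobNorm.comp_affineMap (AffineMap.const ℝ _ Y - design.toAffineMap)).congr
    fun B _ => ?_
  simp only [AffineMap.coe_sub, LinearMap.coe_toAffineMap, LinearMap.coe_sum, LinearMap.coe_comp,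
    LinearMap.coe_proj, Function.comp_apply, Pi.sub_apply, Finset.sum_apply, Function.eval,
    mulLeftLinearMap_apply, design]
  rfl

section NuclearNorm

open scoped MatrixOrder

lemma Matrix.IsHermitian.star_eigenvectorUnitary_mul_mul {ι : Type*} [Fintype ι] [DecidableEq ι]
    {S : Matrix ι ι ℝ} (hS : S.IsHermitian) :
    star (hS.eigenvectorUnitary : Matrix ι ι ℝ) * S * hS.eigenvectorUnitary =
      diagonal hS.eigenvalues := by
  simpa [Unitary.conjStarAlgAut_star_apply] using hS.conjStarAlgAut_star_eigenvectorUnitary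

lemma trace_conjTranspose_mul_le {m n : Type*} [Fintype m] [Fintype n] (P Q : Matrix m n ℝ) :
    (Pᴴ * Q).trace ≤ ∑ j, √((Pᴴ * P) j j) * √((Qᴴ * Q) j j) := by
  simp only [trace, diag, mul_apply, conjTranspose_apply, star_trivial]
  gcongr with j
  simpa only [sq] using Real.sum_mul_le_sqrt_mul_sqrt Finset.univ (fun i => P i j) (fun i => Q i j)

variable {m n : ℕ}

lemma nucNorm_eq_sum_sqrt_eigenvalues (A : Matrix (Fin m) (Fin n) ℝ) :
    nucNorm A = ∑ j, √((posSemidef_conjTranspose_mul_self A).1.eigenvalues j) := by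
  rw [nucNorm, PosSemidef.sqrt, trace_mul_cycle, Unitary.coe_star_mul_self, one_mul,
    trace_diagonal]
  rfl
lemma trace_conjTranspose_mul_le_nucNorm {M : Matrix (Fin m) (Fin n) ℝ} (hM : Mᴴ * M ≤ 1)
    (A : Matrix (Fin m) (Fin n) ℝ) : (Mᴴ * A).trace ≤ nucNorm A := by
  set hS := (posSemidef_conjTranspose_mul_self A).1
  set V : Matrix (Fin n) (Fin n) ℝ := ↑hS.eigenvectorUnitary
  have hVV : star V * V = 1 := Unitary.coe_star_mul_self _
  have hVV' : V * star V = 1 := Unitary.coe_mul_star_self _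
  have htrace : (Mᴴ * A).trace = ((M * V)ᴴ * (A * V)).trace := by
    rw [conjTranspose_mul, ← star_eq_conjTranspose, Matrix.mul_assoc, trace_mul_comm (star V)]
    simp only [Matrix.mul_assoc, hVV', Matrix.mul_one]
  have hcol_M : ∀ j, ((M * V)ᴴ * (M * V)) j j ≤ 1 := by
    intro j
    have hconj : Vᴴ * (1 - Mᴴ * M) * V = 1 - (M * V)ᴴ * (M * V) := by
      rw [Matrix.mul_sub, Matrix.sub_mul, Matrix.mul_one, ← star_eq_conjTranspose, hVV,
        conjTranspose_mul, ← star_eq_conjTranspose]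
      simp only [Matrix.mul_assoc]
    have := ((le_iff.1 hM).conjTranspose_mul_mul_same V).diag_nonneg (i := j)
    rw [hconj, Matrix.sub_apply, one_apply_eq] at this
    linarith
  have hcol_A : ∀ j, ((A * V)ᴴ * (A * V)) j j = hS.eigenvalues j := by
    intro j
    rw [conjTranspose_mul, ← star_eq_conjTranspose, Matrix.mul_assoc, ← Matrix.mul_assoc Aᴴ,
      ← Matrix.mul_assoc, hS.star_eigenvectorUnitary_mul_mul, diagonal_apply_eq]
  rw [htrace, nucNorm_eq_sum_sqrt_eigenvalues]
  refine (trace_conjTranspose_mul_le _ _).trans (Finset.sum_le_sum fun j _ => ?_)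
  rw [hcol_A]
  exact mul_le_of_le_one_left (Real.sqrt_nonneg _) (Real.sqrt_le_one.2 (hcol_M j))

lemma exists_trace_conjTranspose_mul_eq_nucNorm (A : Matrix (Fin m) (Fin n) ℝ) :
    ∃ M : Matrix (Fin m) (Fin n) ℝ, Mᴴ * M ≤ 1 ∧ (Mᴴ * A).trace = nucNorm A := by
  set hS := (posSemidef_conjTranspose_mul_self A).1
  set V : Matrix (Fin n) (Fin n) ℝ := ↑hS.eigenvectorUnitary
  set μ := hS.eigenvalues
  set g : Fin n → ℝ := fun j => (√(μ j))⁻¹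
  have hVV' : V * star V = 1 := Unitary.coe_mul_star_self _
  have hD : star V * (Aᴴ * A) * V = diagonal μ := hS.star_eigenvectorUnitary_mul_mul
  have hgμ : ∀ j, g j * μ j = √(μ j) := fun j => by rw [inv_mul_eq_div, Real.div_sqrt]
  have hgμg : ∀ j, g j * μ j * g j ≤ 1 := fun j => by rw [hgμ]; exact mul_inv_le_one
  have hg_star : (diagonal g)ᴴ = diagonal g := by simp
  refine ⟨A * V * diagonal g * star V, ?_, ?_⟩
  · have hMM : (A * V * diagonal g * star V)ᴴ * (A * V * diagonal g * star V) =
        V * diagonal (fun j => g j * μ j * g j) * star V := by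
      calc _ = V * diagonal g * (star V * (Aᴴ * A) * V) * diagonal g * star V := by
            simp only [conjTranspose_mul, hg_star, star_eq_conjTranspose,
              conjTranspose_conjTranspose, Matrix.mul_assoc]
        _ = _ := by
            rw [hD, Matrix.mul_assoc V, diagonal_mul_diagonal, Matrix.mul_assoc V,
              diagonal_mul_diagonal]
    have hsub : 1 - V * diagonal (fun j => g j * μ j * g j) * star V =
        V * diagonal (fun j => 1 - g j * μ j * g j) * star V := by
      calc _ = V * (1 - diagonal fun j => g j * μ j * g j) * star V := by
            rw [Matrix.mul_sub, Matrix.sub_mul, Matrix.mul_one, hVV']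
        _ = _ := by rw [← diagonal_one, diagonal_sub]
    rw [le_iff, hMM, hsub]
    exact (posSemidef_diagonal_iff.2 fun j => sub_nonneg.2 (hgμg j)).mul_mul_conjTranspose_same V
  · calc _ = (V * (diagonal g * (star V * (Aᴴ * A)))).trace := by
          simp only [conjTranspose_mul, hg_star, star_eq_conjTranspose, conjTranspose_conjTranspose,
            Matrix.mul_assoc]
      _ = (diagonal g * (star V * (Aᴴ * A)) * V).trace := trace_mul_comm _ _
      _ = nucNorm A := by
          rw [Matrix.mul_assoc (diagonal g), hD, diagonal_mul_diagonal, trace_diagonal,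
            nucNorm_eq_sum_sqrt_eigenvalues]
          exact Finset.sum_congr rfl fun j _ => hgμ j

theorem convexOn_nucNorm : ConvexOn ℝ univ (nucNorm : Matrix (Fin m) (Fin n) ℝ → ℝ) := by
  refine ⟨convex_univ, fun A _ B _ a b ha hb _ => ?_⟩
  obtain ⟨M, hM, hMeq⟩ := exists_trace_conjTranspose_mul_eq_nucNorm (a • A + b • B)
  calc nucNorm (a • A + b • B) = a * (Mᴴ * A).trace + b * (Mᴴ * B).trace := by
        rw [← hMeq, Matrix.mul_add, Matrix.mul_smul, Matrix.mul_smul, trace_add, trace_smul,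
          trace_smul, smul_eq_mul, smul_eq_mul]
    _ ≤ a * nucNorm A + b * nucNorm B := by
        gcongr <;> exact trace_conjTranspose_mul_le_nucNorm hM _

end NuclearNorm

theorem stmt_15_general (n q K : ℕ) (p : Fin K → ℕ)
    (Y : Matrix (Fin n) (Fin q) ℝ)
    (X : ∀ k, Matrix (Fin n) (Fin (p k)) ℝ)
    (lam : ℝ) (hlam : 0 < lam) (w : Fin K → ℝ) (hw : ∀ k, 0 < w k) :
    ConvexOn ℝ {x : (∀ k, Matrix (Fin (p k)) (Fin q) ℝ) × ℝ | 0 < x.2}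
      (fun x =>
        (frobNorm (Y - ∑ k, X k * x.1 k)) ^ 2 / (2 * n * q * x.2) + x.2 / 2 +
          lam * ∑ k, w k * nucNorm (x.1 k)) := by
  let E := ∀ k, Matrix (Fin (p k)) (Fin q) ℝ
  have hdomain : {x : E × ℝ | 0 < x.2} = univ ×ˢ Ioi 0 := by ext; simp
  have hconvex : Convex ℝ (univ ×ˢ Ioi (0 : ℝ) : Set (E × ℝ)) := convex_univ.prod (convex_Ioi 0)
  have hfit := ((convexOn_frobNorm_sub_sum_mul Y X).sq_div fun _ _ => Real.sqrt_nonneg _).smul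
    (inv_nonneg.2 (by positivity : (0 : ℝ) ≤ 2 * n * q))
  have hscale := ((LinearMap.snd ℝ E ℝ).convexOn hconvex).smul (by norm_num : (0 : ℝ) ≤ 1 / 2)
  have hpenalty : ConvexOn ℝ (univ ×ˢ Ioi 0) fun x : E × ℝ => lam * ∑ k, w k * nucNorm (x.1 k) := by
    refine (ConvexOn.fun_sum hconvex fun k _ => ?_).smul hlam.le
    exact ((convexOn_nucNorm.comp_linearMap ((LinearMap.proj k).comp (LinearMap.fst ℝ E ℝ))).subset
      (subset_univ _) hconvex).smul (hw k).le
  rw [hdomain]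
  refine ((hfit.add hscale).add hpenalty).congr fun x _ => ?_
  simp only [Pi.add_apply, smul_eq_mul, LinearMap.snd_apply]
  ring

/-- Joint convexity of the scaled composite nuclear norm penalized objective
`(B, σ) ↦ (1/(2nqσ))‖Y − XB‖_F² + σ/2 + λ∑ₖ wₖ‖Bₖ‖_*` on `ℝ^{p×q} × (0, ∞)`. -/
theorem stmt_15 (n q K : ℕ) (hn : 0 < n) (hq : 0 < q) (p : Fin K → ℕ)
    (Y : Matrix (Fin n) (Fin q) ℝ)
    (X : ∀ k, Matrix (Fin n) (Fin (p k)) ℝ)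
    (lam : ℝ) (hlam : 0 < lam) (w : Fin K → ℝ) (hw : ∀ k, 0 < w k) :
    ConvexOn ℝ {x : (∀ k, Matrix (Fin (p k)) (Fin q) ℝ) × ℝ | 0 < x.2}
      (fun x =>
        (frobNorm (Y - ∑ k, X k * x.1 k)) ^ 2 / (2 * n * q * x.2) + x.2 / 2 +
          lam * ∑ k, w k * nucNorm (x.1 k)) :=
  stmt_15_general n q K p Y X lam hlam w hw
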